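/- (Zarantonello's example.) Let X = ℓ²(ℕ), let C = {x ∈ X : ‖x‖ ≤ 1} be the closed unit ball, let (e_n)_{n∈ℕ} be the standard unit vectors, and set z_n = e_0 + e_n for each n ∈ ℕ. Then z_n converges weakly to e_0, while P_C z_n converges weakly to (1/√2) e_0, which is different from P_C e_0 = e_0. In particular, the metric projection P_C is not sequentially weakly continuous. -/

import Mathlib

/-!
Bessel's inequality makes every orthonormal sequence weakly null, so `z n = e₀ + e n ⇀ e₀`.
For `n ≠ 0` the vector `z n` has norm `√2`, hence `P_C (z n) = z n / √2 ⇀ e₀ / √2`, whereas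
`P_C e₀ = e₀`; weak limits being unique, `P_C` is not sequentially weakly continuous.
-/

open Filter Topology RealInnerProductSpace

/-- The real Hilbert space `ℓ²(ℕ)`. -/
noncomputable abbrev ellTwo : Type := lp (fun _ : ℕ => ℝ) 2

/-- The standard unit vectors of `ℓ²(ℕ)`. -/
noncomputable def stdVec (n : ℕ) : ellTwo := lp.single 2 n (1 : ℝ)

/-- The metric projection onto the closed unit ball of `ℓ²(ℕ)`. -/
noncomputable def ballProj (x : ellTwo) : ellTwo :=
  if ‖x‖ ≤ 1 then x else ‖x‖⁻¹ • x

section WeakTendsto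

variable {E : Type*} [NormedAddCommGroup E] [InnerProductSpace ℝ E]

def WeakTendsto (x : ℕ → E) (p : E) : Prop :=
  ∀ w : E, Tendsto (fun n => ⟪x n, w⟫) atTop (𝓝 ⟪p, w⟫)

theorem weakTendsto_const (p : E) : WeakTendsto (fun _ => p) p :=
  fun _ => tendsto_const_nhds

theorem WeakTendsto.add {x y : ℕ → E} {p q : E} (hx : WeakTendsto x p) (hy : WeakTendsto y q) :
    WeakTendsto (x + y) (p + q) := fun w => by
  simpa only [Pi.add_apply, inner_add_left] using (hx w).add (hy w)

theorem WeakTendsto.const_smul {x : ℕ → E} {p : E} (hx : WeakTendsto x p) (c : ℝ) :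
    WeakTendsto (c • x) (c • p) := fun w => by
  simpa only [Pi.smul_apply, real_inner_smul_left] using (hx w).const_mul c

theorem WeakTendsto.congr' {x y : ℕ → E} {p : E} (hx : WeakTendsto x p)
    (hxy : ∀ᶠ n in atTop, x n = y n) : WeakTendsto y p := fun w =>
  (hx w).congr' (hxy.mono fun _ h => by rw [h])

theorem WeakTendsto.unique {x : ℕ → E} {p q : E} (hp : WeakTendsto x p) (hq : WeakTendsto x q) :
    p = q := by
  have h := tendsto_nhds_unique (hp (p - q)) (hq (p - q))
  rwa [← sub_eq_zero, ← inner_sub_left, inner_self_eq_zero, sub_eq_zero] at h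

theorem Orthonormal.weakTendsto_zero {v : ℕ → E} (hv : Orthonormal ℝ v) : WeakTendsto v 0 := by
  intro w
  have hsq : Tendsto (fun n => ‖⟪v n, w⟫‖ ^ 2) atTop (𝓝 0) :=
    (hv.inner_products_summable w).tendsto_atTop_zero
  have hnorm : Tendsto (fun n => ‖⟪v n, w⟫‖) atTop (𝓝 0) := by
    simpa only [Real.sqrt_sq (norm_nonneg _), Real.sqrt_zero] using hsq.sqrt
  simpa only [inner_zero_left] using tendsto_zero_iff_norm_tendsto_zero.mpr hnorm

theorem Orthonormal.norm_add_of_ne {ι : Type*} {v : ι → E} (hv : Orthonormal ℝ v) {i j : ι}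
    (hij : i ≠ j) : ‖v i + v j‖ = √2 := by
  have hsq : ‖v i + v j‖ ^ 2 = 2 := by
    rw [norm_add_sq_real, hv.inner_eq_zero hij, hv.1 i, hv.1 j]
    norm_num
  rw [← hsq, Real.sqrt_sq (norm_nonneg _)]

end WeakTendsto

theorem orthonormal_stdVec : Orthonormal ℝ stdVec := by
  rw [orthonormal_iff_ite]
  intro i j
  simp [stdVec, lp.inner_single_left, lp.single_apply, Pi.single_apply]

theorem ballProj_of_norm_le {x : ellTwo} (hx : ‖x‖ ≤ 1) : ballProj x = x :=
  if_pos hx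

theorem ballProj_of_one_lt_norm {x : ellTwo} (hx : 1 < ‖x‖) : ballProj x = ‖x‖⁻¹ • x :=
  if_neg hx.not_ge

theorem zarantonello_example_general
    (z : ℕ → ellTwo) (hz : ∀ n, z n = stdVec 0 + stdVec n) :
    (∀ w : ellTwo, Tendsto (fun n => ⟪z n, w⟫) atTop (𝓝 ⟪stdVec 0, w⟫)) ∧
    (∀ w : ellTwo, Tendsto (fun n => ⟪ballProj (z n), w⟫) atTop
      (𝓝 ⟪(Real.sqrt 2)⁻¹ • stdVec 0, w⟫)) ∧
    ballProj (stdVec 0) = stdVec 0 ∧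
    (Real.sqrt 2)⁻¹ • stdVec 0 ≠ stdVec 0 ∧
    ¬ (∀ (x : ℕ → ellTwo) (p : ellTwo),
        (∀ w : ellTwo, Tendsto (fun n => ⟪x n, w⟫) atTop (𝓝 ⟪p, w⟫)) →
        (∀ w : ellTwo,
          Tendsto (fun n => ⟪ballProj (x n), w⟫) atTop (𝓝 ⟪ballProj p, w⟫))) := by
  have hz_weak : WeakTendsto z (stdVec 0) := by
    have h := (weakTendsto_const (stdVec 0)).add orthonormal_stdVec.weakTendsto_zero
    rwa [add_zero, ← show z = (fun _ => stdVec 0) + stdVec from funext hz] at h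
  have hproj_weak : WeakTendsto (fun n => ballProj (z n)) ((√2)⁻¹ • stdVec 0) := by
    refine (hz_weak.const_smul (√2)⁻¹).congr' ?_
    filter_upwards [eventually_ne_atTop 0] with n hn
    have hnorm : ‖z n‖ = √2 := by rw [hz]; exact orthonormal_stdVec.norm_add_of_ne hn.symm
    rw [Pi.smul_apply, ballProj_of_one_lt_norm (hnorm ▸ Real.one_lt_sqrt_two), hnorm]
  have hfix : ballProj (stdVec 0) = stdVec 0 :=
    ballProj_of_norm_le (orthonormal_stdVec.1 0).le
  have hne : (√2)⁻¹ • stdVec 0 ≠ stdVec 0 := by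
    intro h
    have h1 : (√2)⁻¹ = 1 := smul_left_injective ℝ (orthonormal_stdVec.ne_zero 0) (by simpa using h)
    exact Real.one_lt_sqrt_two.ne' (inv_eq_one.mp h1)
  refine ⟨hz_weak, hproj_weak, hfix, hne, fun hcont => hne ?_⟩
  have h := hcont z (stdVec 0) hz_weak
  rw [hfix] at h
  exact hproj_weak.unique h

theorem zarantonello_example
    (C : Set ellTwo) (hC : C = {x : ellTwo | ‖x‖ ≤ 1})
    (z : ℕ → ellTwo) (hz : ∀ n, z n = stdVec 0 + stdVec n) :
    (∀ w : ellTwo, Tendsto (fun n => ⟪z n, w⟫) atTop (𝓝 ⟪stdVec 0, w⟫)) ∧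
    (∀ w : ellTwo, Tendsto (fun n => ⟪ballProj (z n), w⟫) atTop
      (𝓝 ⟪(Real.sqrt 2)⁻¹ • stdVec 0, w⟫)) ∧
    ballProj (stdVec 0) = stdVec 0 ∧
    (Real.sqrt 2)⁻¹ • stdVec 0 ≠ stdVec 0 ∧
    ¬ (∀ (x : ℕ → ellTwo) (p : ellTwo),
        (∀ w : ellTwo, Tendsto (fun n => ⟪x n, w⟫) atTop (𝓝 ⟪p, w⟫)) →
        (∀ w : ellTwo,
          Tendsto (fun n => ⟪ballProj (x n), w⟫) atTop (𝓝 ⟪ballProj p, w⟫))) :=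
  zarantonello_example_general z hz
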